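/- Let A be a weakly amenable Banach algebra and I a closed two-sided ideal of A with a bounded approximate identity (e_α) which is quasi-central in A, i.e., a e_α − e_α a → 0 for all a ∈ A. Then A is I-weakly amenable: every continuous derivation A → I* is inner. -/
import Mathlib


open ContinuousLinearMap Filter Topology

namespace Paper

structure Bimod (A : Type*) [NormedRing A] [NormedAlgebra ℂ A]
    (X : Type*) [NormedAddCommGroup X] [NormedSpace ℂ X] where
  l : A → X →L[ℂ] X
  r : A → X →L[ℂ] X
  l_mul : ∀ a b x, l (a * b) x = l a (l b x)
  r_mul : ∀ a b x, r (a * b) x = r b (r a x)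
  lr : ∀ a b x, l a (r b x) = r b (l a x)

variable {A : Type*} [NormedRing A] [NormedAlgebra ℂ A]
variable {X : Type*} [NormedAddCommGroup X] [NormedSpace ℂ X]

noncomputable def Bimod.dual (M : Bimod A X) : Bimod A (X →L[ℂ] ℂ) where
  l a := (compL ℂ X X ℂ).flip (M.r a)
  r a := (compL ℂ X X ℂ).flip (M.l a)
  l_mul a b f := by ext x; simp [M.r_mul]
  r_mul a b f := by ext x; simp [M.l_mul]
  lr a b f := by ext x; simp [M.lr]

def IsDerivation (M : Bimod A X) (D : A →L[ℂ] X) : Prop :=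
  ∀ a b, D (a * b) = M.l a (D b) + M.r b (D a)

def IsInner (M : Bimod A X) (D : A →L[ℂ] X) : Prop :=
  ∃ x, ∀ a, D a = M.l a x - M.r a x

noncomputable def Bimod.restrict (M : Bimod A X) (Y : Submodule ℂ X)
    (hl : ∀ a, ∀ y ∈ Y, M.l a y ∈ Y) (hr : ∀ a, ∀ y ∈ Y, M.r a y ∈ Y) :
    Bimod A Y where
  l a := ((M.l a).comp Y.subtypeL).codRestrict Y fun y => hl a y y.2
  r a := ((M.r a).comp Y.subtypeL).codRestrict Y fun y => hr a y y.2
  l_mul a b y := Subtype.ext (M.l_mul a b y)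
  r_mul a b y := Subtype.ext (M.r_mul a b y)
  lr a b y := Subtype.ext (M.lr a b y)

noncomputable def algBimod (A : Type*) [NormedRing A] [NormedAlgebra ℂ A] : Bimod A A where
  l a := ContinuousLinearMap.mul ℂ A a
  r a := (ContinuousLinearMap.mul ℂ A).flip a
  l_mul a b x := mul_assoc a b x
  r_mul a b x := (mul_assoc x a b).symm
  lr a b x := (mul_assoc a x b).symm

noncomputable def idealBimod (I : Submodule ℂ A)
    (hL : ∀ a, ∀ x ∈ I, a * x ∈ I) (hR : ∀ a, ∀ x ∈ I, x * a ∈ I) :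
    Bimod A I where
  l a := ((ContinuousLinearMap.mul ℂ A a).comp I.subtypeL).codRestrict I fun x => hL a x x.2
  r a := (((ContinuousLinearMap.mul ℂ A).flip a).comp I.subtypeL).codRestrict I fun x => hR a x x.2
  l_mul a b x := Subtype.ext (mul_assoc a b (x : A))
  r_mul a b x := Subtype.ext (mul_assoc (x : A) a b).symm
  lr a b x := Subtype.ext (mul_assoc a (x : A) b).symm

theorem stmt_6
    {A : Type*} [NormedRing A] [NormedAlgebra ℂ A] [CompleteSpace A]
    (hwa : ∀ D : A →L[ℂ] (A →L[ℂ] ℂ),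
        IsDerivation (algBimod A).dual D → IsInner (algBimod A).dual D)
    (I : Submodule ℂ A) (hIc : IsClosed (I : Set A))
    (hL : ∀ a : A, ∀ x ∈ I, a * x ∈ I) (hR : ∀ a : A, ∀ x ∈ I, x * a ∈ I)
    (ι : Type*) (p : Filter ι) [p.NeBot] (e : ι → ↥I)
    (hb : ∃ C : ℝ, ∀ i, ‖e i‖ ≤ C)
    (hai : ∀ x : ↥I, Tendsto (fun i => (e i : A) * (x : A)) p (𝓝 (x : A)) ∧
                     Tendsto (fun i => (x : A) * (e i : A)) p (𝓝 (x : A)))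
    (hqc : ∀ a : A, Tendsto (fun i => a * (e i : A) - (e i : A) * a) p (𝓝 0)) :
    ∀ D : A →L[ℂ] (↥I →L[ℂ] ℂ),
      IsDerivation (idealBimod I hL hR).dual D → IsInner (idealBimod I hL hR).dual D := by
  intro D hD
  obtain ⟨C, hC⟩ := hb
  have hne : Nonempty ι := Filter.nonempty_of_neBot p
  have hC0 : 0 ≤ C := le_trans (norm_nonneg _) (hC hne.some)
  let U : Ultrafilter ι := Ultrafilter.of p
  have hUp : (U : Filter ι) ≤ p := Ultrafilter.of_le p
  have hmem : ∀ (x : A) (i : ι), x * (e i : A) ∈ I := fun x i => hL x _ (e i).2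
  set g : (↥I →L[ℂ] ℂ) → A → ι → ℂ :=
    fun ψ x i => ψ ⟨x * (e i : A), hmem x i⟩ with hg
  have hgb : ∀ ψ x i, ‖g ψ x i‖ ≤ ‖ψ‖ * C * ‖x‖ := by
    intro ψ x i
    calc ‖g ψ x i‖ ≤ ‖ψ‖ * ‖(⟨x * (e i : A), hmem x i⟩ : ↥I)‖ := ψ.le_opNorm _
      _ = ‖ψ‖ * ‖x * (e i : A)‖ := rfl
      _ ≤ ‖ψ‖ * (‖x‖ * ‖(e i : A)‖) := by
          gcongr
          exact norm_mul_le _ _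
      _ ≤ ‖ψ‖ * (‖x‖ * C) := by
          gcongr
          exact hC i
      _ = ‖ψ‖ * C * ‖x‖ := by ring
  have hex : ∀ (ψ : ↥I →L[ℂ] ℂ) (x : A), ∃ z, Tendsto (g ψ x) U (𝓝 z) := by
    intro ψ x
    have hK : IsCompact (Metric.closedBall (0:ℂ) (‖ψ‖ * C * ‖x‖)) :=
      isCompact_closedBall _ _
    have hle : (↑(U.map (g ψ x)) : Filter ℂ) ≤
        𝓟 (Metric.closedBall (0:ℂ) (‖ψ‖ * C * ‖x‖)) := by
      rw [Ultrafilter.coe_map, Filter.le_principal_iff, Filter.mem_map]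
      refine Filter.univ_mem' ?_
      intro i
      simp only [Set.mem_preimage, Metric.mem_closedBall, dist_zero_right]
      exact hgb ψ x i
    obtain ⟨z, _, hz⟩ := hK.ultrafilter_le_nhds (U.map (g ψ x)) hle
    exact ⟨z, hz⟩
  choose Jv hJv using hex
  have key : ∀ {ψ : ↥I →L[ℂ] ℂ} {x : A} {z : ℂ},
      Tendsto (g ψ x) U (𝓝 z) → Jv ψ x = z :=
    fun h => tendsto_nhds_unique (hJv _ _) h
  have hJnorm : ∀ ψ x, ‖Jv ψ x‖ ≤ ‖ψ‖ * C * ‖x‖ :=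
    fun ψ x => le_of_tendsto' (hJv ψ x).norm (hgb ψ x)
  have hadd : ∀ ψ x y, Jv ψ (x + y) = Jv ψ x + Jv ψ y := by
    intro ψ x y
    refine key ?_
    have heq : (fun i => g ψ x i + g ψ y i) = g ψ (x + y) := by
      funext i
      show ψ ⟨x * (e i : A), hmem x i⟩ + ψ ⟨y * (e i : A), hmem y i⟩
          = ψ ⟨(x + y) * (e i : A), hmem _ i⟩
      rw [← map_add]
      exact congrArg ψ (Subtype.ext (add_mul x y _).symm)
    exact heq ▸ ((hJv ψ x).add (hJv ψ y))
  have hsmul : ∀ ψ (c : ℂ) x, Jv ψ (c • x) = c • Jv ψ x := by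
    intro ψ c x
    refine key ?_
    have heq : (fun i => c • g ψ x i) = g ψ (c • x) := by
      funext i
      show c • ψ ⟨x * (e i : A), hmem x i⟩ = ψ ⟨(c • x) * (e i : A), hmem _ i⟩
      rw [← map_smul]
      exact congrArg ψ (Subtype.ext (smul_mul_assoc c x _).symm)
    exact heq ▸ ((hJv ψ x).const_smul c)
  have haddψ : ∀ (ψ φ : ↥I →L[ℂ] ℂ) x, Jv (ψ + φ) x = Jv ψ x + Jv φ x := by
    intro ψ φ x
    exact key ((hJv ψ x).add (hJv φ x))
  have hsmulψ : ∀ (c : ℂ) (ψ : ↥I →L[ℂ] ℂ) x, Jv (c • ψ) x = c • Jv ψ x := by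
    intro c ψ x
    exact key ((hJv ψ x).const_smul c)
  let Jl : (↥I →L[ℂ] ℂ) → A →L[ℂ] ℂ := fun ψ =>
    LinearMap.mkContinuous
      { toFun := Jv ψ, map_add' := hadd ψ, map_smul' := hsmul ψ }
      (‖ψ‖ * C) (fun x => by simpa [mul_assoc] using hJnorm ψ x)
  have hJl_norm : ∀ ψ, ‖Jl ψ‖ ≤ ‖ψ‖ * C := by
    intro ψ
    exact LinearMap.mkContinuous_norm_le _ (mul_nonneg (norm_nonneg ψ) hC0) _
  let JL : (↥I →L[ℂ] ℂ) →L[ℂ] (A →L[ℂ] ℂ) :=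
    LinearMap.mkContinuous
      { toFun := Jl
        map_add' := fun ψ φ => by
          ext x
          show Jv (ψ + φ) x = Jv ψ x + Jv φ x
          exact haddψ ψ φ x
        map_smul' := fun c ψ => by
          ext x
          show Jv (c • ψ) x = c • Jv ψ x
          exact hsmulψ c ψ x }
      C (fun ψ => by
        calc ‖Jl ψ‖ ≤ ‖ψ‖ * C := hJl_norm ψ
          _ = C * ‖ψ‖ := by ring)
  let D' : A →L[ℂ] (A →L[ℂ] ℂ) := JL.comp D
  -- right-module property of J
  have hJr : ∀ (b : A) (ψ : ↥I →L[ℂ] ℂ) (x : A),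
      Jv ((idealBimod I hL hR).dual.r b ψ) x = Jv ψ (b * x) := by
    intro b ψ x
    refine key ?_
    have heq : g ψ (b * x) = g ((idealBimod I hL hR).dual.r b ψ) x := by
      funext i
      show ψ ⟨(b * x) * (e i : A), hmem _ i⟩ = ψ ⟨b * (x * (e i : A)), hL b _ (hmem x i)⟩
      exact congrArg ψ (Subtype.ext (mul_assoc b x _))
    exact heq ▸ hJv ψ (b * x)
  -- left-module property of J (uses quasi-centrality)
  have hJl' : ∀ (a : A) (ψ : ↥I →L[ℂ] ℂ) (x : A),
      Jv ((idealBimod I hL hR).dual.l a ψ) x = Jv ψ (x * a) := by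
    intro a ψ x
    refine key ?_
    have h0 : Tendsto (fun i =>
        ((⟨x * (e i : A) * a, hR a _ (hmem x i)⟩ : ↥I) -
         ⟨x * a * (e i : A), hmem (x * a) i⟩)) U (𝓝 0) := by
      rw [tendsto_subtype_rng]
      have h1 : Tendsto (fun i => -(x * (a * (e i : A) - (e i : A) * a))) U
          (𝓝 (-(x * 0))) :=
        ((tendsto_const_nhds.mul ((hqc a).mono_left hUp))).neg
      simp only [mul_zero, neg_zero] at h1
      have hfe : (fun i => (x * (e i : A) * a) - (x * a * (e i : A)))
          = fun i => -(x * (a * (e i : A) - (e i : A) * a)) := by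
        funext i
        noncomm_ring
      simp only [AddSubgroupClass.coe_sub, ZeroMemClass.coe_zero]
      rw [hfe]
      exact h1
    have h2 : Tendsto (fun i =>
        ψ ⟨x * (e i : A) * a, hR a _ (hmem x i)⟩ -
        ψ ⟨x * a * (e i : A), hmem (x * a) i⟩) U (𝓝 0) := by
      have := (ψ.continuous.tendsto 0).comp h0
      simpa only [Function.comp_def, map_sub, map_zero] using this
    have h3 : Tendsto (fun i =>
        (ψ ⟨x * (e i : A) * a, hR a _ (hmem x i)⟩ -
         ψ ⟨x * a * (e i : A), hmem (x * a) i⟩) + g ψ (x * a) i) U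
        (𝓝 (0 + Jv ψ (x * a))) := h2.add (hJv ψ (x * a))
    rw [zero_add] at h3
    have heq : (fun i =>
        (ψ ⟨x * (e i : A) * a, hR a _ (hmem x i)⟩ -
         ψ ⟨x * a * (e i : A), hmem (x * a) i⟩) + g ψ (x * a) i)
        = g ((idealBimod I hL hR).dual.l a ψ) x := by
      funext i
      show (ψ ⟨x * (e i : A) * a, hR a _ (hmem x i)⟩ -
         ψ ⟨x * a * (e i : A), hmem (x * a) i⟩) + ψ ⟨x * a * (e i : A), hmem (x * a) i⟩
         = ψ ⟨x * (e i : A) * a, hR a _ (hmem x i)⟩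
      abel
    exact heq ▸ h3
  -- D' is a derivation into A*
  have hder : IsDerivation (algBimod A).dual D' := by
    intro a b
    ext x
    show Jv (D (a * b)) x = Jv (D b) (x * a) + Jv (D a) (b * x)
    rw [hD a b, haddψ, hJl', hJr]
  obtain ⟨φ, hφ⟩ := hwa D' hder
  -- J restricted back to I is the identity
  have hrest : ∀ (ψ : ↥I →L[ℂ] ℂ) (y : ↥I), Jv ψ (y : A) = ψ y := by
    intro ψ y
    refine key ?_
    have h0 : Tendsto (fun i => (⟨(y : A) * (e i : A), hmem _ i⟩ : ↥I)) U (𝓝 y) := by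
      rw [tendsto_subtype_rng]
      exact (hai y).2.mono_left hUp
    have := (ψ.continuous.tendsto y).comp h0
    simpa only [Function.comp_def] using this
  refine ⟨φ.comp I.subtypeL, fun a => ?_⟩
  ext y
  have h1 : D a y = Jv (D a) (y : A) := (hrest (D a) y).symm
  have h3 : D' a (y : A) = φ ((y : A) * a) - φ (a * (y : A)) := by
    rw [hφ a]
    rfl
  calc D a y = Jv (D a) (y : A) := h1
    _ = D' a (y : A) := rfl
    _ = φ ((y : A) * a) - φ (a * (y : A)) := h3
    _ = ((idealBimod I hL hR).dual.l a (φ.comp I.subtypeL) -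
         (idealBimod I hL hR).dual.r a (φ.comp I.subtypeL)) y := rfl

end Paper
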